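/- Assume ‖W⁻¹ΔW‖₂ < 1, z ≠ 0, and g ≠ 0, and let k_E = ‖W⁻¹‖₂‖g‖₂/‖z‖₂ and κ(W) = ‖W‖₂‖W⁻¹‖₂. If (ΔX_k, ΔY_k) solves the perturbed PGCS equation, then ‖Δz‖₂/‖z‖₂ ≤ [ (‖Δg‖₂/‖g‖₂)·k_E + (‖ΔW‖₂/‖W‖₂)·κ(W) ] / (1 − ‖W⁻¹ΔW‖₂). -/

import Mathlib

open Matrix
open scoped Kronecker

noncomputable section

/-- column-stacking `vec` of a matrix, indexed by (column, row). -/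
def vecM {a b : ℕ} (M : Matrix (Fin a) (Fin b) ℝ) : Fin b × Fin a → ℝ :=
  fun ji => M ji.2 ji.1

/-- Euclidean norm of a finitely-indexed real vector. -/
def l2norm {ι : Type*} [Fintype ι] (v : ι → ℝ) : ℝ :=
  Real.sqrt (∑ i, v i ^ 2)

/-- Frobenius norm of a real matrix. -/
def frob {ι κ : Type*} [Fintype ι] [Fintype κ] (M : Matrix ι κ ℝ) : ℝ :=
  Real.sqrt (∑ i, ∑ j, M i j ^ 2)

/-- Spectral norm of a real matrix: supremum of `‖M v‖₂` over the closed unit ball. -/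
def specNorm {ι κ : Type*} [Fintype ι] [Fintype κ] (M : Matrix ι κ ℝ) : ℝ :=
  sSup ((fun v => l2norm (M.mulVec v)) '' {v | l2norm v ≤ 1})

/-- sup-norm (`‖·‖∞`) of a finitely-indexed real vector. -/
def linf {ι : Type*} [Fintype ι] (v : ι → ℝ) : ℝ := ⨆ i, |v i|

/-- max-row-sum (∞-operator) norm of a real matrix. -/
def rowSumNorm {ι κ : Type*} [Fintype ι] [Fintype κ] (M : Matrix ι κ ℝ) : ℝ :=
  ⨆ i, ∑ j, |M i j|

/-- max-norm (`‖·‖_max`) of a real matrix. -/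
def maxNorm {ι κ : Type*} [Fintype ι] [Fintype κ] (M : Matrix ι κ ℝ) : ℝ :=
  ⨆ i, ⨆ j, |M i j|

/-- entrywise absolute value of a matrix. -/
def matAbs {ι κ : Type*} (M : Matrix ι κ ℝ) : Matrix ι κ ℝ := M.map (fun x => |x|)

/-- spectral radius (maximum modulus of the complex eigenvalues) of a real square matrix. -/
def specRad {ι : Type*} [Fintype ι] [DecidableEq ι] (M : Matrix ι ι ℝ) : ENNReal :=
  spectralRadius ℂ (M.map (fun x => (x : ℂ)))

/-- index type for the stacked vector `z = (vec X₁; vec Y₁; …; vec X_p; vec Y_p)`: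
component `(k, 0, ·)` holds `vec X_k` and `(k, 1, ·)` holds `vec Y_k`. -/
abbrev BIdx (m n p : ℕ) := Fin p × Fin 2 × Fin n × Fin m

/-- index type for the vec'd data `(vec A_k; vec B_k; vec E_k; vec C_k; vec D_k; vec F_k)`
of one period. -/
abbrev CIdx (m n : ℕ) :=
  (Fin m × Fin m) ⊕ (Fin n × Fin n) ⊕ (Fin n × Fin m) ⊕
  (Fin m × Fin m) ⊕ (Fin n × Fin n) ⊕ (Fin n × Fin m)

variable {m n p : ℕ}

/-- the stacked vector `(vec X₁; vec Y₁; …; vec X_p; vec Y_p)`. -/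
def bigVec (X Y : Fin p → Matrix (Fin m) (Fin n) ℝ) : BIdx m n p → ℝ :=
  fun x => if x.2.1 = 0 then vecM (X x.1) x.2.2 else vecM (Y x.1) x.2.2

/-- the coefficient matrix `W` of the PGCS equation: block row `(k,0)` has `Iₙ ⊗ A_k` in
block column `(k,0)` and `−(B_kᵀ ⊗ Iₘ)` in block column `(k,1)`; block row `(k,1)` has
`Iₙ ⊗ C_k` in block column `(k+1 mod p, 0)` and `−(D_kᵀ ⊗ Iₘ)` in block column `(k,1)`. -/
def Wmat [NeZero p] (A C : Fin p → Matrix (Fin m) (Fin m) ℝ)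
    (B D : Fin p → Matrix (Fin n) (Fin n) ℝ) :
    Matrix (BIdx m n p) (BIdx m n p) ℝ :=
  Matrix.of fun x y =>
    if x.2.1 = 0 then
      (if y.1 = x.1 ∧ y.2.1 = 0 then
        ((1 : Matrix (Fin n) (Fin n) ℝ) ⊗ₖ A x.1) x.2.2 y.2.2 else 0) +
      (if y.1 = x.1 ∧ y.2.1 = 1 then
        (-((B x.1)ᵀ ⊗ₖ (1 : Matrix (Fin m) (Fin m) ℝ))) x.2.2 y.2.2 else 0)
    else
      (if y.1 = x.1 + 1 ∧ y.2.1 = 0 then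
        ((1 : Matrix (Fin n) (Fin n) ℝ) ⊗ₖ C x.1) x.2.2 y.2.2 else 0) +
      (if y.1 = x.1 ∧ y.2.1 = 1 then
        (-((D x.1)ᵀ ⊗ₖ (1 : Matrix (Fin m) (Fin m) ℝ))) x.2.2 y.2.2 else 0)

/-- the block-diagonal matrix `Ĥ = diag(Ĥ⁽¹⁾,…,Ĥ⁽ᵖ⁾)` (also `H₁`, `H₂`) with block
`Ĥ⁽ᵏ⁾ = [α_k (X_kᵀ ⊗ Iₘ), −β_k (Iₙ ⊗ Y_k), −γ_k I, 0, 0, 0;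
        0, 0, 0, ζ_k (X_{k+1}ᵀ ⊗ Iₘ), −τ_k (Iₙ ⊗ Y_k), −δ_k I]`. -/
def Hmat [NeZero p] (Xh Yh : Fin p → Matrix (Fin m) (Fin n) ℝ)
    (al be ga ze ta de : Fin p → ℝ) :
    Matrix (BIdx m n p) (Fin p × CIdx m n) ℝ :=
  Matrix.of fun x y =>
    if y.1 = x.1 then
      if x.2.1 = 0 then
        (match y.2 with
        | Sum.inl a => al x.1 * (((Xh x.1)ᵀ ⊗ₖ (1 : Matrix (Fin m) (Fin m) ℝ)) x.2.2 a)
        | Sum.inr (Sum.inl b) =>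
            -(be x.1 * (((1 : Matrix (Fin n) (Fin n) ℝ) ⊗ₖ Yh x.1) x.2.2 b))
        | Sum.inr (Sum.inr (Sum.inl e)) =>
            -(ga x.1 * ((1 : Matrix (Fin n × Fin m) (Fin n × Fin m) ℝ) x.2.2 e))
        | _ => 0)
      else
        (match y.2 with
        | Sum.inr (Sum.inr (Sum.inr (Sum.inl c))) =>
            ze x.1 * (((Xh (x.1 + 1))ᵀ ⊗ₖ (1 : Matrix (Fin m) (Fin m) ℝ)) x.2.2 c)
        | Sum.inr (Sum.inr (Sum.inr (Sum.inr (Sum.inl d)))) =>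
            -(ta x.1 * (((1 : Matrix (Fin n) (Fin n) ℝ) ⊗ₖ Yh x.1) x.2.2 d))
        | Sum.inr (Sum.inr (Sum.inr (Sum.inr (Sum.inr f)))) =>
            -(de x.1 * ((1 : Matrix (Fin n × Fin m) (Fin n × Fin m) ℝ) x.2.2 f))
        | _ => 0)
    else 0

/-- the parameter vector `t = (vec A₁; vec B₁; vec E₁; vec C₁; vec D₁; vec F₁; …)`. -/
def tvec (A C : Fin p → Matrix (Fin m) (Fin m) ℝ)
    (B D : Fin p → Matrix (Fin n) (Fin n) ℝ)
    (E F : Fin p → Matrix (Fin m) (Fin n) ℝ) : Fin p × CIdx m n → ℝ :=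
  fun y =>
    match y.2 with
    | Sum.inl a => vecM (A y.1) a
    | Sum.inr (Sum.inl b) => vecM (B y.1) b
    | Sum.inr (Sum.inr (Sum.inl e)) => vecM (E y.1) e
    | Sum.inr (Sum.inr (Sum.inr (Sum.inl c))) => vecM (C y.1) c
    | Sum.inr (Sum.inr (Sum.inr (Sum.inr (Sum.inl d)))) => vecM (D y.1) d
    | Sum.inr (Sum.inr (Sum.inr (Sum.inr (Sum.inr f)))) => vecM (F y.1) f

/-- the matrix `A_k` encoded in a parameter vector `t`. -/
def pA (t : Fin p × CIdx m n → ℝ) (k : Fin p) : Matrix (Fin m) (Fin m) ℝ :=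
  Matrix.of fun i j => t (k, Sum.inl (j, i))

/-- the matrix `B_k` encoded in a parameter vector `t`. -/
def pB (t : Fin p × CIdx m n → ℝ) (k : Fin p) : Matrix (Fin n) (Fin n) ℝ :=
  Matrix.of fun i j => t (k, Sum.inr (Sum.inl (j, i)))

/-- the matrix `E_k` encoded in a parameter vector `t`. -/
def pE (t : Fin p × CIdx m n → ℝ) (k : Fin p) : Matrix (Fin m) (Fin n) ℝ :=
  Matrix.of fun i j => t (k, Sum.inr (Sum.inr (Sum.inl (j, i))))

/-- the matrix `C_k` encoded in a parameter vector `t`. -/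
def pC (t : Fin p × CIdx m n → ℝ) (k : Fin p) : Matrix (Fin m) (Fin m) ℝ :=
  Matrix.of fun i j => t (k, Sum.inr (Sum.inr (Sum.inr (Sum.inl (j, i)))))

/-- the matrix `D_k` encoded in a parameter vector `t`. -/
def pD (t : Fin p × CIdx m n → ℝ) (k : Fin p) : Matrix (Fin n) (Fin n) ℝ :=
  Matrix.of fun i j => t (k, Sum.inr (Sum.inr (Sum.inr (Sum.inr (Sum.inl (j, i))))))

/-- the matrix `F_k` encoded in a parameter vector `t`. -/
def pF (t : Fin p × CIdx m n → ℝ) (k : Fin p) : Matrix (Fin m) (Fin n) ℝ :=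
  Matrix.of fun i j => t (k, Sum.inr (Sum.inr (Sum.inr (Sum.inr (Sum.inr (j, i))))))

/-- the matrix `W(t)` built from the parameter vector `t`. -/
def Wt [NeZero p] (t : Fin p × CIdx m n → ℝ) : Matrix (BIdx m n p) (BIdx m n p) ℝ :=
  Wmat (pA t) (pC t) (pB t) (pD t)

/-- the right-hand side `g(t) = (vec E₁; vec F₁; …; vec E_p; vec F_p)`. -/
def gt (t : Fin p × CIdx m n → ℝ) : BIdx m n p → ℝ := bigVec (pE t) (pF t)

/-- the set of parameters for which `W(t)` is invertible. -/
def Dset (m n p : ℕ) [NeZero p] : Set (Fin p × CIdx m n → ℝ) := {t | IsUnit (Wt t)}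

/-- the solution map `Ψ(t) = W(t)⁻¹ g(t)`. -/
def Psi [NeZero p] (t : Fin p × CIdx m n → ℝ) : BIdx m n p → ℝ := (Wt t)⁻¹.mulVec (gt t)

/-- the solution matrix `X_k` read off from `Ψ(t)`. -/
def Xsol [NeZero p] (t : Fin p × CIdx m n → ℝ) (k : Fin p) : Matrix (Fin m) (Fin n) ℝ :=
  Matrix.of fun i j => Psi t (k, (0 : Fin 2), (j, i))

/-- the solution matrix `Y_k` read off from `Ψ(t)`. -/
def Ysol [NeZero p] (t : Fin p × CIdx m n → ℝ) (k : Fin p) : Matrix (Fin m) (Fin n) ℝ :=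
  Matrix.of fun i j => Psi t (k, (1 : Fin 2), (j, i))

/-- the matrix `H₂(t)` (all tolerances equal to one), built from the solution `Ψ(t)`. -/
def H2t [NeZero p] (t : Fin p × CIdx m n → ℝ) : Matrix (BIdx m n p) (Fin p × CIdx m n) ℝ :=
  Hmat (Xsol t) (Ysol t) 1 1 1 1 1 1

/-- the componentwise relative ball `B⁰(a, ε)`. -/
def B0 {ι : Type*} (a : ι → ℝ) (ε : ℝ) : Set (ι → ℝ) := {x | ∀ i, |x i - a i| ≤ ε * |a i|}

/-- the componentwise distance `d(x, a)`. -/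
def cdist {ι : Type*} [Fintype ι] (x a : ι → ℝ) : ℝ :=
  ⨆ i, if a i = 0 then |x i - a i| else |x i - a i| / |a i|

/-!
Subtracting `W z = g` from `(W + ΔW)(z + Δz) = g + Δg` gives
`Δz = W⁻¹(Δg - ΔW z) - (W⁻¹ΔW) Δz`. Taking norms and absorbing the last term, which is
possible because `‖W⁻¹ΔW‖₂ < 1`, yields
`‖Δz‖₂ (1 - ‖W⁻¹ΔW‖₂) ≤ ‖W⁻¹‖₂ (‖Δg‖₂ + ‖ΔW‖₂ ‖z‖₂)`, and dividing by `‖z‖₂` gives the bound.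
The periodic structure enters only through `vec (A X B) = (Bᵀ ⊗ A) vec X`, which turns the
PGCS equation and its perturbation into the linear systems with matrices `W` and `W + ΔW`.
-/

section Norms

open scoped Matrix.Norms.L2Operator

variable {ι κ : Type*} [Fintype ι] [Fintype κ]

theorem l2norm_eq_norm_toLp (v : ι → ℝ) : l2norm v = ‖WithLp.toLp 2 v‖ := by
  simp [l2norm, EuclideanSpace.norm_eq, sq_abs]

theorem l2norm_pos {v : ι → ℝ} (hv : v ≠ 0) : 0 < l2norm v := by
  rw [l2norm_eq_norm_toLp, norm_pos_iff]
  simpa using hv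

theorem l2norm_sub_le (u v : ι → ℝ) : l2norm (u - v) ≤ l2norm u + l2norm v := by
  simpa only [l2norm_eq_norm_toLp, WithLp.toLp_sub] using norm_sub_le _ _

variable [DecidableEq κ]

theorem specNorm_eq_l2_opNorm (M : Matrix ι κ ℝ) : specNorm M = ‖M‖ := by
  rw [Matrix.l2_opNorm_def, ← ContinuousLinearMap.sSup_unitClosedBall_eq_norm, specNorm]
  congr 1
  ext r
  constructor
  · rintro ⟨v, hv, rfl⟩
    refine ⟨WithLp.toLp 2 v, ?_, ?_⟩
    · simpa [l2norm_eq_norm_toLp] using hv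
    · simp [l2norm_eq_norm_toLp]
  · rintro ⟨x, hx, rfl⟩
    refine ⟨x.ofLp, ?_, ?_⟩
    · simpa [l2norm_eq_norm_toLp] using hx
    · exact l2norm_eq_norm_toLp _

theorem specNorm_nonneg (M : Matrix ι κ ℝ) : 0 ≤ specNorm M :=
  (specNorm_eq_l2_opNorm M).symm ▸ norm_nonneg M

theorem specNorm_pos {M : Matrix ι κ ℝ} (hM : M ≠ 0) : 0 < specNorm M :=
  (specNorm_eq_l2_opNorm M).symm ▸ norm_pos_iff.mpr hM

theorem l2norm_mulVec_le (M : Matrix ι κ ℝ) (v : κ → ℝ) :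
    l2norm (M *ᵥ v) ≤ specNorm M * l2norm v := by
  simpa [specNorm_eq_l2_opNorm, l2norm_eq_norm_toLp] using M.l2_opNorm_mulVec (WithLp.toLp 2 v)

end Norms

section Perturbation

variable {ι : Type*} [Fintype ι] [DecidableEq ι]
  {W dW : Matrix ι ι ℝ} {z dz g dg : ι → ℝ}

theorem eq_inv_mulVec_sub_of_perturbed (hW : IsUnit W) (hsol : W *ᵥ z = g)
    (hpert : (W + dW) *ᵥ (z + dz) = g + dg) :
    dz = W⁻¹ *ᵥ (dg - dW *ᵥ z) - (W⁻¹ * dW) *ᵥ dz := by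
  have hWdz : W *ᵥ dz = dg - dW *ᵥ z - dW *ᵥ dz := by
    rw [add_mulVec, mulVec_add, mulVec_add, hsol] at hpert
    linear_combination hpert
  calc dz = W⁻¹ *ᵥ (W *ᵥ dz) := by
        rw [mulVec_mulVec, nonsing_inv_mul W ((isUnit_iff_isUnit_det W).mp hW), one_mulVec]
    _ = W⁻¹ *ᵥ (dg - dW *ᵥ z) - (W⁻¹ * dW) *ᵥ dz := by
        rw [hWdz, mulVec_sub, mulVec_mulVec]

theorem l2norm_mul_one_sub_le (hW : IsUnit W) (hsol : W *ᵥ z = g)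
    (hpert : (W + dW) *ᵥ (z + dz) = g + dg) :
    l2norm dz * (1 - specNorm (W⁻¹ * dW)) ≤
      specNorm W⁻¹ * (l2norm dg + specNorm dW * l2norm z) := by
  have hdz : l2norm dz ≤
      specNorm W⁻¹ * (l2norm dg + specNorm dW * l2norm z) + specNorm (W⁻¹ * dW) * l2norm dz :=
    calc l2norm dz = l2norm (W⁻¹ *ᵥ (dg - dW *ᵥ z) - (W⁻¹ * dW) *ᵥ dz) := by
          rw [← eq_inv_mulVec_sub_of_perturbed hW hsol hpert]
      _ ≤ specNorm W⁻¹ * l2norm (dg - dW *ᵥ z) + specNorm (W⁻¹ * dW) * l2norm dz :=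
          (l2norm_sub_le _ _).trans (add_le_add (l2norm_mulVec_le _ _) (l2norm_mulVec_le _ _))
      _ ≤ specNorm W⁻¹ * (l2norm dg + specNorm dW * l2norm z) +
            specNorm (W⁻¹ * dW) * l2norm dz := by
          gcongr
          · exact specNorm_nonneg _
          · exact (l2norm_sub_le _ _).trans (add_le_add_right (l2norm_mulVec_le _ _) _)
  linarith

theorem relative_error_le_of_perturbed (hW : IsUnit W) (hz : z ≠ 0) (hg : g ≠ 0)
    (hsmall : specNorm (W⁻¹ * dW) < 1) (hsol : W *ᵥ z = g)
    (hpert : (W + dW) *ᵥ (z + dz) = g + dg) :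
    l2norm dz / l2norm z ≤
      (l2norm dg / l2norm g * (specNorm W⁻¹ * l2norm g / l2norm z) +
          specNorm dW / specNorm W * (specNorm W * specNorm W⁻¹)) /
        (1 - specNorm (W⁻¹ * dW)) := by
  obtain ⟨i, -⟩ := Function.ne_iff.mp hz
  have : Nonempty ι := ⟨i⟩
  have hW0 : 0 < specNorm W := specNorm_pos hW.ne_zero
  have hz0 := l2norm_pos hz
  have hg0 := l2norm_pos hg
  have hrhs : l2norm dg / l2norm g * (specNorm W⁻¹ * l2norm g / l2norm z) +
        specNorm dW / specNorm W * (specNorm W * specNorm W⁻¹) =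
      specNorm W⁻¹ * (l2norm dg + specNorm dW * l2norm z) / l2norm z := by
    field_simp
  rw [hrhs, div_right_comm, div_le_div_iff_of_pos_right hz0, le_div_iff₀ (by linarith)]
  exact l2norm_mul_one_sub_le hW hsol hpert

end Perturbation

section PGCS

theorem vecM_eq_vec {a b : ℕ} (M : Matrix (Fin a) (Fin b) ℝ) : vecM M = M.vec := rfl

theorem bigVec_add (X Y dX dY : Fin p → Matrix (Fin m) (Fin n) ℝ) :
    bigVec (X + dX) (Y + dY) = bigVec X Y + bigVec dX dY := by
  ext x
  by_cases hx : x.2.1 = 0 <;> simp [bigVec, vecM, hx]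

variable [NeZero p]

theorem Wmat_add (A C dA dC : Fin p → Matrix (Fin m) (Fin m) ℝ)
    (B D dB dD : Fin p → Matrix (Fin n) (Fin n) ℝ) :
    Wmat (A + dA) (C + dC) (B + dB) (D + dD) = Wmat A C B D + Wmat dA dC dB dD := by
  ext x y
  simp only [Wmat, of_apply, Matrix.add_apply, Pi.add_apply, kroneckerMap_apply,
    Matrix.neg_apply, transpose_apply]
  split_ifs <;> ring

theorem Wmat_mulVec_bigVec (A C : Fin p → Matrix (Fin m) (Fin m) ℝ)
    (B D : Fin p → Matrix (Fin n) (Fin n) ℝ) (X Y : Fin p → Matrix (Fin m) (Fin n) ℝ) :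
    Wmat A C B D *ᵥ bigVec X Y =
      bigVec (fun k => A k * X k - Y k * B k) (fun k => C k * X (k + 1) - Y k * D k) := by
  ext ⟨k, s, ji⟩
  have hA := congrFun (kronecker_mulVec_vec (A k) (X k) 1) ji
  have hB := congrFun (kronecker_mulVec_vec 1 (Y k) (B k)ᵀ) ji
  have hC := congrFun (kronecker_mulVec_vec (C k) (X (k + 1)) 1) ji
  have hD := congrFun (kronecker_mulVec_vec 1 (Y k) (D k)ᵀ) ji
  fin_cases s <;>
    simp_all [mulVec, dotProduct, Fintype.sum_prod_type, Wmat, bigVec, ite_and, vecM_eq_vec,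
      Finset.sum_add_distrib, sub_eq_add_neg]

theorem Wmat_mulVec_bigVec_of_solves {A C : Fin p → Matrix (Fin m) (Fin m) ℝ}
    {B D : Fin p → Matrix (Fin n) (Fin n) ℝ} {E F X Y : Fin p → Matrix (Fin m) (Fin n) ℝ}
    (h : ∀ k, A k * X k - Y k * B k = E k ∧ C k * X (k + 1) - Y k * D k = F k) :
    Wmat A C B D *ᵥ bigVec X Y = bigVec E F := by
  rw [Wmat_mulVec_bigVec]
  congr <;> funext k
  exacts [(h k).1, (h k).2]

end PGCS

theorem effective_condition_bound_general (m n p : ℕ) [NeZero p]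
    (A C dA dC : Fin p → Matrix (Fin m) (Fin m) ℝ)
    (B D dB dD : Fin p → Matrix (Fin n) (Fin n) ℝ)
    (E F dE dF X Y dX dY : Fin p → Matrix (Fin m) (Fin n) ℝ)
    (hW : IsUnit (Wmat A C B D))
    (hsol : ∀ k : Fin p, A k * X k - Y k * B k = E k ∧ C k * X (k + 1) - Y k * D k = F k)
    (hpert : specNorm ((Wmat A C B D)⁻¹ * Wmat dA dC dB dD) < 1)
    (hz : bigVec X Y ≠ 0) (hg : bigVec E F ≠ 0)
    (hperturbed : ∀ k : Fin p,
      (A k + dA k) * (X k + dX k) - (Y k + dY k) * (B k + dB k) = E k + dE k ∧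
      (C k + dC k) * (X (k + 1) + dX (k + 1)) - (Y k + dY k) * (D k + dD k) = F k + dF k) :
    let kE : ℝ := specNorm (Wmat A C B D)⁻¹ * l2norm (bigVec E F) / l2norm (bigVec X Y)
    let κW : ℝ := specNorm (Wmat A C B D) * specNorm (Wmat A C B D)⁻¹
    l2norm (bigVec dX dY) / l2norm (bigVec X Y) ≤
      ((l2norm (bigVec dE dF) / l2norm (bigVec E F)) * kE +
          (specNorm (Wmat dA dC dB dD) / specNorm (Wmat A C B D)) * κW) /
        (1 - specNorm ((Wmat A C B D)⁻¹ * Wmat dA dC dB dD)) := by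
  have hperturbed' : (Wmat A C B D + Wmat dA dC dB dD) *ᵥ (bigVec X Y + bigVec dX dY) =
      bigVec E F + bigVec dE dF := by
    rw [← Wmat_add, ← bigVec_add, ← bigVec_add]
    exact Wmat_mulVec_bigVec_of_solves hperturbed
  exact relative_error_le_of_perturbed hW hz hg hpert
    (Wmat_mulVec_bigVec_of_solves hsol) hperturbed'

/-- relative perturbation bound via the effective condition number `k_E`
and the condition number `κ(W)`. -/
theorem effective_condition_bound (m n p : ℕ) [NeZero m] [NeZero n] [NeZero p]
    (A C dA dC : Fin p → Matrix (Fin m) (Fin m) ℝ)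
    (B D dB dD : Fin p → Matrix (Fin n) (Fin n) ℝ)
    (E F dE dF X Y dX dY : Fin p → Matrix (Fin m) (Fin n) ℝ)
    (hW : IsUnit (Wmat A C B D))
    (hsol : ∀ k : Fin p, A k * X k - Y k * B k = E k ∧ C k * X (k + 1) - Y k * D k = F k)
    (hpert : specNorm ((Wmat A C B D)⁻¹ * Wmat dA dC dB dD) < 1)
    (hz : bigVec X Y ≠ 0) (hg : bigVec E F ≠ 0)
    (hperturbed : ∀ k : Fin p,
      (A k + dA k) * (X k + dX k) - (Y k + dY k) * (B k + dB k) = E k + dE k ∧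
      (C k + dC k) * (X (k + 1) + dX (k + 1)) - (Y k + dY k) * (D k + dD k) = F k + dF k) :
    let kE : ℝ := specNorm (Wmat A C B D)⁻¹ * l2norm (bigVec E F) / l2norm (bigVec X Y)
    let κW : ℝ := specNorm (Wmat A C B D) * specNorm (Wmat A C B D)⁻¹
    l2norm (bigVec dX dY) / l2norm (bigVec X Y) ≤
      ((l2norm (bigVec dE dF) / l2norm (bigVec E F)) * kE +
          (specNorm (Wmat dA dC dB dD) / specNorm (Wmat A C B D)) * κW) /
        (1 - specNorm ((Wmat A C B D)⁻¹ * Wmat dA dC dB dD)) :=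
  effective_condition_bound_general m n p A C dA dC B D dB dD E F dE dF X Y dX dY hW hsol hpert hz
    hg hperturbed
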